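/- Let T be a finite abelian 2-group and ψ : T → ℚ/ℤ a quadratic 2-linear function. Then the 4-fold orthogonal sum ψ⊥ψ⊥ψ⊥ψ on T⁴ is isometric to (−ψ)⊥(−ψ)⊥(−ψ)⊥(−ψ). Consequently G(ψ)⁴/|G(ψ)|⁴ is a complex conjugate-symmetric quantity and, for ψ tame, 8β(ψ) = 0, i.e. β(ψ) ∈ (1/8)ℤ/ℤ. -/

import Mathlib

def bform {T M : Type*} [AddCommGroup T] [AddCommGroup M] (ψ : T → M) (x y : T) : M :=
  ψ (x + y) - ψ x - ψ y

def IsTwoLinear {T M : Type*} [AddCommGroup T] [AddCommGroup M] (ψ : T → M) : Prop :=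
  ∀ x y z : T, bform ψ (x + y) z = bform ψ x z + bform ψ y z

def IsQuadratic {T : Type*} [AddCommGroup T] (ψ : T → AddCircle (1 : ℚ)) : Prop :=
  ∀ (a : ℤ) (x : T), ψ (a • x) = (a ^ 2) • ψ x

/-- The canonical map `ℚ/ℤ → ℝ/ℤ`. -/
noncomputable def q2r : AddCircle (1 : ℚ) →+ AddCircle (1 : ℝ) :=
  QuotientAddGroup.map (AddSubgroup.zmultiples (1 : ℚ)) (AddSubgroup.zmultiples (1 : ℝ))
    (Rat.castHom ℝ).toAddMonoidHom (by
      intro x hx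
      obtain ⟨n, rfl⟩ := AddSubgroup.mem_zmultiples_iff.mp hx
      exact AddSubgroup.mem_comap.mpr
        (AddSubgroup.mem_zmultiples_iff.mpr ⟨n, by push_cast [zsmul_eq_mul]; norm_num⟩))

/-- `exp (2 π i x)` for `x ∈ ℚ/ℤ`. -/
noncomputable def eQ (x : AddCircle (1 : ℚ)) : ℂ := AddCircle.toCircle (q2r x)

/-! Write `2|T| - 1 = a² + b² + c² + d²` (four-square theorem). Multiplication by the quaternion
`q = a + bi + cj + dk` on `T⁴` scales `ψ⊥ψ⊥ψ⊥ψ` by `q q̄ = 2|T| - 1`, because all cross terms of the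
bilinear form cancel. This scalar acts as `-1` on `T` and on the values of `ψ`, since
`2 ψ(t) = b(t, t)` and `|T|` kills `T`; so `q` is an isometry onto `-ψ⊥-ψ⊥-ψ⊥-ψ`, invertible
with inverse `-q̄`. Isometric forms have equal Gauss sums, whence
`G(ψ)⁴ = G(-ψ)⁴ = conj (G(ψ))⁴` and `G(ψ)⁸ = |G(ψ)|⁸`. -/

section Quadratic

variable {T M : Type*} [AddCommGroup T] [AddCommGroup M]

lemma bform_comm (ψ : T → M) (x y : T) : bform ψ x y = bform ψ y x := by
  simp only [bform, add_comm x y]; abel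

def IsTwoLinear.bilin {ψ : T → M} (h2 : IsTwoLinear ψ) : T →+ T →+ M :=
  AddMonoidHom.mk' (fun x => AddMonoidHom.mk' (bform ψ x) fun y z => by
      rw [bform_comm ψ x, h2, bform_comm ψ y, bform_comm ψ z])
    fun x y => by ext z; exact h2 x y z

lemma IsTwoLinear.bilin_apply {ψ : T → M} (h2 : IsTwoLinear ψ) (x y : T) :
    h2.bilin x y = bform ψ x y := rfl

lemma IsTwoLinear.map_add {ψ : T → M} (h2 : IsTwoLinear ψ) (x y : T) :
    ψ (x + y) = ψ x + ψ y + h2.bilin x y := by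
  rw [h2.bilin_apply, bform]; abel

lemma bform_self {ψ : T → M} (hq : ∀ (a : ℤ) (x : T), ψ (a • x) = a ^ 2 • ψ x) (t : T) :
    bform ψ t t = 2 • ψ t := by
  rw [bform, ← two_zsmul, hq]; module

lemma IsTwoLinear.nsmul_two_mul_map_eq_zero {ψ : T → M} (h2 : IsTwoLinear ψ)
    (hq : ∀ (a : ℤ) (x : T), ψ (a • x) = a ^ 2 • ψ x) {m : ℕ} {t : T} (ht : m • t = 0) :
    (2 * m) • ψ t = 0 := by
  rw [mul_nsmul, ← bform_self hq, ← h2.bilin_apply, ← AddMonoidHom.nsmul_apply,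
    ← map_nsmul, ht, map_zero, AddMonoidHom.zero_apply]

end Quadratic

lemma zsmul_eq_neg_of_nsmul_eq_zero {G : Type*} [AddGroup G] {N : ℤ} {n : ℕ} (hN : N + 1 = n)
    {y : G} (hy : n • y = 0) : N • y = -y :=
  eq_neg_of_add_eq_zero_left <| by rw [← add_one_zsmul, hN, natCast_zsmul, hy]

section Connolly

variable {T M : Type*} [AddCommGroup T] [AddCommGroup M]

def orthSum4 (ψ : T → M) (v : T × T × T × T) : M :=
  ψ v.1 + ψ v.2.1 + ψ v.2.2.1 + ψ v.2.2.2

/-- Left multiplication by the quaternion `a + bi + cj + dk` acting on `T⁴ = T ⊗ ℍ(ℤ)`. -/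
def connolly (a b c d : ℤ) : T × T × T × T →+ T × T × T × T :=
  AddMonoidHom.mk' (fun v =>
    (a • v.1 + b • v.2.1 + c • v.2.2.1 + d • v.2.2.2,
     -(b • v.1) + a • v.2.1 - d • v.2.2.1 + c • v.2.2.2,
     -(c • v.1) + d • v.2.1 + a • v.2.2.1 - b • v.2.2.2,
     -(d • v.1) - c • v.2.1 + b • v.2.2.1 + a • v.2.2.2))
    fun v w => by
      simp only [Prod.fst_add, Prod.snd_add, Prod.mk_add_mk, smul_add, Prod.mk.injEq]
      refine ⟨by abel, by abel, by abel, by abel⟩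

lemma connolly_conj_apply (a b c d : ℤ) (v : T × T × T × T) :
    connolly a (-b) (-c) (-d) (connolly a b c d v) = (a ^ 2 + b ^ 2 + c ^ 2 + d ^ 2) • v := by
  obtain ⟨x, y, z, w⟩ := v
  simp only [connolly, AddMonoidHom.mk'_apply, Prod.smul_mk, Prod.mk.injEq]
  refine ⟨by module, by module, by module, by module⟩

lemma orthSum4_connolly {ψ : T → M} (h2 : IsTwoLinear ψ)
    (hq : ∀ (a : ℤ) (x : T), ψ (a • x) = a ^ 2 • ψ x) (a b c d : ℤ) (v : T × T × T × T) :
    orthSum4 ψ (connolly a b c d v) = (a ^ 2 + b ^ 2 + c ^ 2 + d ^ 2) • orthSum4 ψ v := by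
  obtain ⟨x, y, z, w⟩ := v
  simp only [orthSum4, connolly, AddMonoidHom.mk'_apply, sub_eq_add_neg, ← neg_smul,
    h2.map_add, hq, map_add, map_zsmul, AddMonoidHom.add_apply, AddMonoidHom.smul_apply]
  module

def connollyEquiv (a b c d : ℤ) (hN : ∀ x : T, (a ^ 2 + b ^ 2 + c ^ 2 + d ^ 2) • x = -x) :
    T × T × T × T ≃+ T × T × T × T :=
  have hN4 (v : T × T × T × T) : (a ^ 2 + b ^ 2 + c ^ 2 + d ^ 2) • v = -v :=
    Prod.ext (hN _) (Prod.ext (hN _) (Prod.ext (hN _) (hN _)))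
  AddEquiv.mk'
    { toFun := connolly a b c d
      invFun := fun v => -connolly a (-b) (-c) (-d) v
      left_inv := fun v => by simp only [connolly_conj_apply, hN4, neg_neg]
      right_inv := fun v => by
        have := connolly_conj_apply a (-b) (-c) (-d) v
        simp only [neg_neg, neg_sq] at this
        simp only [map_neg, this, hN4, neg_neg] }
    fun v w => map_add (connolly a b c d) v w

theorem exists_addEquiv_orthSum4_neg [Finite T] {ψ : T → M} (h2 : IsTwoLinear ψ)
    (hq : ∀ (a : ℤ) (x : T), ψ (a • x) = a ^ 2 • ψ x) :
    ∃ h : T × T × T × T ≃+ T × T × T × T, ∀ z, orthSum4 (-ψ) (h z) = orthSum4 ψ z := by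
  obtain ⟨a, b, c, d, hsq⟩ := Nat.sum_four_squares (2 * Nat.card T - 1)
  have hN : (a : ℤ) ^ 2 + (b : ℤ) ^ 2 + (c : ℤ) ^ 2 + (d : ℤ) ^ 2 + 1 = (2 * Nat.card T : ℕ) := by
    have := Nat.card_pos (α := T)
    exact_mod_cast (by omega : a ^ 2 + b ^ 2 + c ^ 2 + d ^ 2 + 1 = 2 * Nat.card T)
  have hT (x : T) : ((a : ℤ) ^ 2 + (b : ℤ) ^ 2 + (c : ℤ) ^ 2 + (d : ℤ) ^ 2) • x = -x :=
    zsmul_eq_neg_of_nsmul_eq_zero hN (by rw [mul_nsmul, card_nsmul_eq_zero'])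
  refine ⟨connollyEquiv a b c d hT, fun z => ?_⟩
  have hψ (t : T) : ((a : ℤ) ^ 2 + (b : ℤ) ^ 2 + (c : ℤ) ^ 2 + (d : ℤ) ^ 2) • ψ t = -ψ t :=
    zsmul_eq_neg_of_nsmul_eq_zero hN (h2.nsmul_two_mul_map_eq_zero hq card_nsmul_eq_zero')
  change orthSum4 (-ψ) (connolly a b c d z) = _
  have hneg : orthSum4 (-ψ) (connolly a b c d z) = -orthSum4 ψ (connolly a b c d z) := by
    simp only [orthSum4, Pi.neg_apply]; abel
  rw [hneg, orthSum4_connolly h2 hq]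
  simp only [orthSum4, smul_add, hψ]
  abel

end Connolly

section GaussSum

lemma eQ_add (x y : AddCircle (1 : ℚ)) : eQ (x + y) = eQ x * eQ y := by
  rw [eQ, eQ, eQ, map_add, AddCircle.toCircle_add, Circle.coe_mul]

lemma eQ_neg (x : AddCircle (1 : ℚ)) : eQ (-x) = starRingEnd ℂ (eQ x) := by
  rw [eQ, eQ, map_neg, AddCircle.toCircle_neg, Circle.coe_inv_eq_conj]

variable {T U : Type*} [Fintype T] [Fintype U]

noncomputable def quadGaussSum (ψ : T → AddCircle (1 : ℚ)) : ℂ := ∑ t, eQ (ψ t)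

lemma quadGaussSum_congr_equiv {ψ : T → AddCircle (1 : ℚ)} {φ : U → AddCircle (1 : ℚ)} (e : T ≃ U)
    (h : ∀ x, φ (e x) = ψ x) : quadGaussSum ψ = quadGaussSum φ := by
  simp only [quadGaussSum, ← e.sum_comp, h]

lemma conj_quadGaussSum (ψ : T → AddCircle (1 : ℚ)) :
    starRingEnd ℂ (quadGaussSum ψ) = quadGaussSum (-ψ) := by
  simp only [quadGaussSum, map_sum, Pi.neg_apply, eQ_neg]

lemma quadGaussSum_orthSum4 [AddCommGroup T] (ψ : T → AddCircle (1 : ℚ)) :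
    quadGaussSum (orthSum4 ψ) = quadGaussSum ψ ^ 4 := by
  simp only [quadGaussSum, orthSum4, eQ_add, Fintype.sum_prod_type, pow_succ', pow_zero, mul_one,
    Finset.sum_mul]
  simp only [Finset.mul_sum, mul_assoc]

end GaussSum

lemma pow_eight_eq_norm_pow_eight {z : ℂ} (h : z ^ 4 = starRingEnd ℂ z ^ 4) :
    z ^ 8 = (‖z‖ : ℂ) ^ 8 := by
  rw [show z ^ 8 = (z * starRingEnd ℂ z) ^ 4 by rw [mul_pow, ← h]; ring, Complex.mul_conj,
    Complex.normSq_eq_norm_sq]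
  push_cast; ring

theorem connolly_two_group_general {T : Type*} [AddCommGroup T] [Fintype T]
    (ψ : T → AddCircle (1 : ℚ)) (h2 : IsTwoLinear ψ) (hq : IsQuadratic ψ) :
    (∃ h : T × T × T × T ≃+ T × T × T × T,
        ∀ z : T × T × T × T,
          -ψ (h z).1 + -ψ (h z).2.1 + -ψ (h z).2.2.1 + -ψ (h z).2.2.2 =
            ψ z.1 + ψ z.2.1 + ψ z.2.2.1 + ψ z.2.2.2) ∧
      (∑ t : T, eQ (ψ t)) ^ 4 = (starRingEnd ℂ) (∑ t : T, eQ (ψ t)) ^ 4 ∧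
      ((∀ t : T, (∀ s : T, bform ψ t s = 0) → ψ t = 0) →
        (∑ t : T, eQ (ψ t)) ^ 8 = (‖∑ t : T, eQ (ψ t)‖ : ℂ) ^ 8) := by
  obtain ⟨h, hh⟩ := exists_addEquiv_orthSum4_neg h2 hq
  have h4 : quadGaussSum ψ ^ 4 = starRingEnd ℂ (quadGaussSum ψ) ^ 4 := by
    rw [conj_quadGaussSum, ← quadGaussSum_orthSum4, ← quadGaussSum_orthSum4,
      quadGaussSum_congr_equiv h.toEquiv hh]
  exact ⟨⟨h, hh⟩, h4, fun _ => pow_eight_eq_norm_pow_eight h4⟩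

/-- For a quadratic 2-linear `ψ` on a finite abelian 2-group `T`, the 4-fold sum
`ψ⊥ψ⊥ψ⊥ψ` is isometric to `(-ψ)⊥(-ψ)⊥(-ψ)⊥(-ψ)`.  Consequently
`G(ψ)⁴ = conj(G(ψ))⁴`, and if `ψ` is tame then `8 β(ψ) = 0`, i.e.
`G(ψ)⁸ = |G(ψ)|⁸`. -/
theorem connolly_two_group {T : Type*} [AddCommGroup T] [Fintype T]
    (hT : ∀ x : T, ∃ n : ℕ, 2 ^ n • x = 0)
    (ψ : T → AddCircle (1 : ℚ)) (h2 : IsTwoLinear ψ) (hq : IsQuadratic ψ) :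
    (∃ h : T × T × T × T ≃+ T × T × T × T,
        ∀ z : T × T × T × T,
          -ψ (h z).1 + -ψ (h z).2.1 + -ψ (h z).2.2.1 + -ψ (h z).2.2.2 =
            ψ z.1 + ψ z.2.1 + ψ z.2.2.1 + ψ z.2.2.2) ∧
      (∑ t : T, eQ (ψ t)) ^ 4 = (starRingEnd ℂ) (∑ t : T, eQ (ψ t)) ^ 4 ∧
      ((∀ t : T, (∀ s : T, bform ψ t s = 0) → ψ t = 0) →
        (∑ t : T, eQ (ψ t)) ^ 8 = (‖∑ t : T, eQ (ψ t)‖ : ℂ) ^ 8) :=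
  connolly_two_group_general ψ h2 hq
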